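/- Let Γ be a strictly Deza graph with parameters (n, k, b, a) with k = b + 1 and β(v) > 1 for every vertex v. If every vertex of Γ is of type (C), then Γ is isomorphic to the 2-clique extension of the complete multipartite graph with n/(n − k + 1) parts of size (n − k + 1)/2. -/

import Mathlib

open Finset SimpleGraph

universe u v

/-- The number of common neighbours of two vertices. -/
def commonNbrs {V : Type u} [Fintype V] [DecidableEq V] (G : SimpleGraph V)
    [DecidableRel G.Adj] (x y : V) : ℕ :=
  (G.neighborFinset x ∩ G.neighborFinset y).card

/-- `G` is a Deza graph with parameters `(n, k, b, a)`: a nonempty `k`-regular graph on `n`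
vertices in which any two distinct vertices have either `b` or `a` common neighbours,
where `b ≥ a`. -/
def IsDezaGraph {V : Type u} [Fintype V] [DecidableEq V] (G : SimpleGraph V)
    [DecidableRel G.Adj] (n k b a : ℕ) : Prop :=
  G ≠ ⊥ ∧ Fintype.card V = n ∧ G.IsRegularOfDegree k ∧ a ≤ b ∧
    ∀ x y : V, x ≠ y → commonNbrs G x y = b ∨ commonNbrs G x y = a

/-- `G` is a strictly Deza graph with parameters `(n, k, b, a)`: a Deza graph of
diameter 2 that is not strongly regular. -/
def IsStrictlyDezaGraph {V : Type u} [Fintype V] [DecidableEq V] (G : SimpleGraph V)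
    [DecidableRel G.Adj] (n k b a : ℕ) : Prop :=
  IsDezaGraph G n k b a ∧ G.Connected ∧ (∀ x y : V, G.dist x y ≤ 2) ∧
    (∃ x y : V, G.dist x y = 2) ∧ ¬ ∃ ℓ μ : ℕ, G.IsSRGWith n k ℓ μ

/-- `B(v)`: the set of vertices `u ≠ v` having exactly `b` common neighbours with `v`. -/
def dezaB {V : Type u} [Fintype V] [DecidableEq V] (G : SimpleGraph V)
    [DecidableRel G.Adj] (b : ℕ) (v : V) : Finset V :=
  univ.filter fun u => u ≠ v ∧ commonNbrs G u v = b

/-- `A(v)`: the set of vertices `u ≠ v` having exactly `a` common neighbours with `v`. -/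
def dezaA {V : Type u} [Fintype V] [DecidableEq V] (G : SimpleGraph V)
    [DecidableRel G.Adj] (a : ℕ) (v : V) : Finset V :=
  univ.filter fun u => u ≠ v ∧ commonNbrs G u v = a

/-- `B[v] = B(v) ∪ {v}`. -/
def dezaBc {V : Type u} [Fintype V] [DecidableEq V] (G : SimpleGraph V)
    [DecidableRel G.Adj] (b : ℕ) (v : V) : Finset V :=
  insert v (dezaB G b v)

/-- A vertex `v` is of type (A) if `B(v) ∩ N(v) = ∅`. -/
def IsTypeA {V : Type u} [Fintype V] [DecidableEq V] (G : SimpleGraph V)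
    [DecidableRel G.Adj] (b : ℕ) (v : V) : Prop :=
  dezaB G b v ∩ G.neighborFinset v = ∅

/-- A vertex `v` is of type (B) if `B(v) ⊆ N(v)`. -/
def IsTypeB {V : Type u} [Fintype V] [DecidableEq V] (G : SimpleGraph V)
    [DecidableRel G.Adj] (b : ℕ) (v : V) : Prop :=
  dezaB G b v ⊆ G.neighborFinset v

/-- A vertex `v` is of type (C) if `|B(v) ∩ N(v)| = 1`. -/
def IsTypeC {V : Type u} [Fintype V] [DecidableEq V] (G : SimpleGraph V)
    [DecidableRel G.Adj] (b : ℕ) (v : V) : Prop :=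
  (dezaB G b v ∩ G.neighborFinset v).card = 1

/-- A vertex `x` of type (A) is of type (A1) if there exists `y ∈ N(x)` with
`N(x) \ N(xᵢ) = {y}` for every `xᵢ ∈ B(x)`. -/
def IsTypeA1 {V : Type u} [Fintype V] [DecidableEq V] (G : SimpleGraph V)
    [DecidableRel G.Adj] (b : ℕ) (x : V) : Prop :=
  IsTypeA G b x ∧ ∃ y ∈ G.neighborFinset x,
    ∀ xi ∈ dezaB G b x, G.neighborFinset x \ G.neighborFinset xi = {y}

/-- A vertex `x` of type (A) is of type (A2) if there exists `z ∉ N[x]` with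
`N(xᵢ) \ N(x) = {z}` for every `xᵢ ∈ B(x)`. -/
def IsTypeA2 {V : Type u} [Fintype V] [DecidableEq V] (G : SimpleGraph V)
    [DecidableRel G.Adj] (b : ℕ) (x : V) : Prop :=
  IsTypeA G b x ∧ ∃ z ∉ insert x (G.neighborFinset x),
    ∀ xi ∈ dezaB G b x, G.neighborFinset xi \ G.neighborFinset x = {z}

/-- The complete multipartite graph with `m` parts of size `t`. -/
def completeMultipartiteGr (m t : ℕ) : SimpleGraph (Fin m × Fin t) where
  Adj u v := u.1 ≠ v.1
  symm := ⟨fun _ _ h => Ne.symm h⟩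
  loopless := ⟨fun _ h => h rfl⟩

/-- The 2-clique extension of a graph `H`: vertices `(u, i)` and `(v, j)` are adjacent
iff `u ~ v` in `H`, or `u = v` and `i ≠ j`. -/
def cliqueExt2 {W : Type v} (H : SimpleGraph W) : SimpleGraph (W × Fin 2) where
  Adj u v := H.Adj u.1 v.1 ∨ (u.1 = v.1 ∧ u.2 ≠ v.2)
  symm := by
    constructor
    intro u v h
    rcases h with h | ⟨h1, h2⟩
    · exact Or.inl h.symm
    · exact Or.inr ⟨h1.symm, h2.symm⟩
  loopless := by
    constructor
    intro u h
    rcases h with h | ⟨_, h2⟩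
    · exact H.irrefl h
    · exact h2 rfl

/-!
Type (C) gives every vertex `v` a unique neighbour `σ v` with `b` common neighbours, and since
`k = b + 1` this forces `N(u) = N(v) - σ v + σ u` for every `u ∈ B(v)`. Hence `B[v]` is an
equivalence class, `σ` is an involution preserving the classes, and adjacency between different
classes depends only on the classes. Counting the paths of length two from `v` shows that all
classes have the same size `s = β + 1 ≥ 3`. For `x`, `y` in different classes,
`N(x) ∩ N(y) - {σ x, σ y}` is a union of classes with `a - 2` or `a` elements according as
`x ~ y` or not; as adjacent pairs in different classes exist, `s ∣ 2` rules out non-adjacent ones.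
So `G` is the 2-clique extension (on the pairs `{x, σ x}`) of the complete multipartite graph on
the classes, and `n = s + b`.
-/

namespace Finset

variable {α : Type*} [DecidableEq α]

theorem eq_insert_erase_of_card_inter {s t : Finset α} {w z : α} (hst : #s = #t)
    (hinter : #(s ∩ t) + 1 = #t) (hw : w ∈ t) (hws : w ∉ s) (hz : z ∈ s) (hzt : z ∉ t) :
    s = insert z (t.erase w) := by
  have hinter_eq : s ∩ t = t.erase w := by
    refine eq_of_subset_of_card_le (fun x hx => ?_) ?_
    · exact mem_erase.2 ⟨fun h => hws (h ▸ (mem_inter.1 hx).1), (mem_inter.1 hx).2⟩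
    · rw [card_erase_of_mem hw]; omega
  refine (eq_of_subset_of_card_le (insert_subset hz ?_) ?_).symm
  · exact hinter_eq ▸ inter_subset_left
  · rw [card_insert_of_notMem fun h => hzt (mem_of_mem_erase h), card_erase_of_mem hw]; omega

end Finset

section Fibres

variable {α β : Type*} [Fintype α] [DecidableEq β]

theorem exists_equiv_prod_fin_of_card_fiber (f : α → β) {t : ℕ}
    (hf : ∀ y, #{x | f x = y} = t) : ∃ e : α ≃ β × Fin t, ∀ x, (e x).1 = f x := by
  have hfib : ∀ y, {x // f x = y} ≃ Fin t := fun y =>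
    Fintype.equivFinOfCardEq (by rw [Fintype.card_subtype, hf])
  exact ⟨(Equiv.sigmaFiberEquiv f).symm.trans
    ((Equiv.sigmaCongrRight hfib).trans (Equiv.sigmaEquivProd _ _)), fun x => rfl⟩

theorem dvd_card_of_card_fiber (f : α → β) {s : ℕ} (hf : ∀ x, #{y | f y = f x} = s)
    {T : Finset α} (hT : ∀ x ∈ T, ∀ y, f y = f x → y ∈ T) : s ∣ #T := by
  rw [card_eq_sum_card_image f T]
  refine dvd_sum fun q hq => ?_
  obtain ⟨x, hx, rfl⟩ := mem_image.1 hq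
  have hfib : T.filter (f · = f x) = univ.filter (f · = f x) := by
    ext y
    simp only [mem_filter, mem_univ, true_and, and_iff_right_iff_imp]
    exact hT x hx y
  rw [hfib, hf x]

theorem card_fiber_comp {γ : Type*} [Fintype β] [DecidableEq γ] (p : α → β) (π : β → γ)
    {c : ℕ} (hp : ∀ y, #{x | p x = y} = c) (q : γ) :
    #{x | π (p x) = q} = #{y | π y = q} * c := by
  rw [card_eq_sum_card_fiberwise (f := p) (t := {y | π y = q}) fun x hx => by simpa using hx,
    ← smul_eq_mul, ← sum_const]
  refine sum_congr rfl fun y hy => ?_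
  rw [← hp y]
  congr 1
  ext x
  simp only [mem_filter, mem_univ, true_and] at hy ⊢
  exact ⟨fun h => h.2, fun h => ⟨h ▸ hy, h⟩⟩

end Fibres

section CliqueExtension

variable {V W W' Q : Type*}

def SimpleGraph.Iso.cliqueExt2 {H : SimpleGraph W} {H' : SimpleGraph W'} (e : H ≃g H') :
    _root_.cliqueExt2 H ≃g _root_.cliqueExt2 H' where
  toEquiv := e.toEquiv.prodCongr (Equiv.refl _)
  map_rel_iff' {x y} := by
    change H'.Adj (e x.1) (e y.1) ∨ (e x.1 = e y.1 ∧ x.2 ≠ y.2) ↔ _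
    rw [e.map_adj_iff, e.apply_eq_iff_eq]
    rfl

theorem nonempty_iso_cliqueExt2 [Fintype V] [DecidableEq W] (G : SimpleGraph V)
    (H : SimpleGraph W) (p : V → W) (hp : ∀ w, #{x | p x = w} = 2)
    (hadj : ∀ x y, G.Adj x y ↔ H.Adj (p x) (p y) ∨ (p x = p y ∧ x ≠ y)) :
    Nonempty (G ≃g cliqueExt2 H) := by
  obtain ⟨e, he⟩ := exists_equiv_prod_fin_of_card_fiber p hp
  refine ⟨⟨e, fun {x y} => ?_⟩⟩
  have hsnd : p x = p y → ((e x).2 = (e y).2 ↔ x = y) := fun hxy => by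
    rw [← e.apply_eq_iff_eq, Prod.ext_iff, he, he]
    simp [hxy]
  change H.Adj (e x).1 (e y).1 ∨ ((e x).1 = (e y).1 ∧ (e x).2 ≠ (e y).2) ↔ _
  rw [hadj, he, he]
  exact or_congr_right
    ⟨fun h => ⟨h.1, (hsnd h.1).not.1 h.2⟩, fun h => ⟨h.1, (hsnd h.1).not.2 h.2⟩⟩

theorem nonempty_iso_completeMultipartiteGr [Fintype W] [Fintype Q] [DecidableEq Q]
    (H : SimpleGraph W) (f : W → Q) {t : ℕ} (hf : ∀ q, #{w | f w = q} = t)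
    (hadj : ∀ x y, H.Adj x y ↔ f x ≠ f y) :
    Nonempty (H ≃g completeMultipartiteGr (Fintype.card Q) t) := by
  obtain ⟨e, he⟩ := exists_equiv_prod_fin_of_card_fiber f hf
  refine ⟨⟨e.trans ((Fintype.equivFin Q).prodCongr (Equiv.refl _)), fun {x y} => ?_⟩⟩
  change (Fintype.equivFin Q) (e x).1 ≠ (Fintype.equivFin Q) (e y).1 ↔ _
  rw [hadj, he, he, Ne, Ne, EmbeddingLike.apply_eq_iff_eq]

def Function.Involutive.orbitSetoid {σ : V → V} (hσ : Function.Involutive σ) : Setoid V where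
  r x y := y = x ∨ y = σ x
  iseqv := by
    refine ⟨fun x => Or.inl rfl, ?_, ?_⟩
    · rintro x y (rfl | rfl)
      exacts [Or.inl rfl, Or.inr (hσ x).symm]
    · rintro x y z (rfl | rfl) (rfl | rfl)
      exacts [Or.inl rfl, Or.inr rfl, Or.inr rfl, Or.inl (hσ x)]

theorem nonempty_iso_cliqueExt2_completeMultipartiteGr [Fintype V] [DecidableEq Q]
    (G : SimpleGraph V) (f : V → Q) {σ : V → V} (hσ : Function.Involutive σ)
    (hσne : ∀ x, σ x ≠ x) (hfσ : ∀ x, f (σ x) = f x) {s : ℕ}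
    (hf : ∀ x, #{y | f y = f x} = s) (hadj : ∀ x y, G.Adj x y ↔ f x ≠ f y ∨ y = σ x) :
    Nonempty (G ≃g cliqueExt2 (completeMultipartiteGr (Fintype.card V / s) (s / 2))) := by
  classical
  let P := hσ.orbitSetoid
  let π : Quotient P → Set.range f := Quotient.lift (Set.rangeFactorization f) <| by
    rintro x y (rfl | rfl)
    exacts [rfl, Subtype.ext (hfσ x).symm]
  have hπf : ∀ x y, π ⟦x⟧ = π ⟦y⟧ ↔ f x = f y := fun _ _ => Subtype.ext_iff
  have hP : ∀ w : Quotient P, #{x | Quotient.mk P x = w} = 2 := by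
    refine Quotient.ind fun x => ?_
    have hfib : ({y | Quotient.mk P y = Quotient.mk P x} : Finset V) = {x, σ x} := by
      ext y
      simp only [mem_filter, mem_univ, true_and, mem_insert, mem_singleton, Quotient.eq]
      exact Setoid.comm' P
    rw [hfib, card_pair (hσne x).symm]
  have hrange : ∀ q : Set.range f, #{x | Set.rangeFactorization f x = q} = s := by
    rintro ⟨_, x, rfl⟩
    simpa [Set.rangeFactorization, Subtype.ext_iff] using hf x
  have hπ : ∀ q, #{w | π w = q} = s / 2 := fun q => by
    have h : #{w | π w = q} * 2 = s := (card_fiber_comp _ π hP q).symm.trans (hrange q)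
    omega
  have hcard : Fintype.card (Set.range f) = Fintype.card V / s := by
    obtain ⟨e, -⟩ := exists_equiv_prod_fin_of_card_fiber _ hrange
    rcases Nat.eq_zero_or_pos s with rfl | hs
    · have : IsEmpty (Set.range f) := ⟨fun ⟨_, x, _⟩ => (e x).2.elim0⟩
      simp
    · rw [Fintype.card_congr e, Fintype.card_prod, Fintype.card_fin, Nat.mul_div_cancel _ hs]
  let H := (⊤ : SimpleGraph (Set.range f)).comap π
  obtain ⟨eH⟩ := nonempty_iso_completeMultipartiteGr H π hπ fun _ _ => Iff.rfl
  obtain ⟨eG⟩ := nonempty_iso_cliqueExt2 G H (Quotient.mk P) hP fun x y => by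
    change _ ↔ π ⟦x⟧ ≠ π ⟦y⟧ ∨ _
    rw [hadj, Quotient.eq, Ne, Ne, hπf]
    refine or_congr_right ⟨fun h => ⟨Or.inr h, ?_⟩, ?_⟩
    · rintro rfl
      exact hσne x h.symm
    · rintro ⟨rfl | rfl, hxy⟩
      exacts [(hxy rfl).elim, rfl]
  rw [← hcard]
  exact ⟨eG.trans eH.cliqueExt2⟩

end CliqueExtension

section DezaGraph

variable {V : Type u} [Fintype V] [DecidableEq V] {G : SimpleGraph V} [DecidableRel G.Adj]
  {n k b a : ℕ}

theorem commonNbrs_comm (x y : V) : commonNbrs G x y = commonNbrs G y x := by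
  rw [commonNbrs, commonNbrs, inter_comm]

theorem commonNbrs_self (x : V) : commonNbrs G x x = G.degree x := by
  rw [commonNbrs, inter_self, card_neighborFinset_eq_degree]

theorem commonNbrs_eq_card_commonNeighbors (x y : V) :
    commonNbrs G x y = Fintype.card (G.commonNeighbors x y) := by
  rw [commonNbrs, ← Set.toFinset_card]
  congr 1
  ext w
  simp [mem_commonNeighbors]

theorem mem_dezaB_comm {x y : V} : x ∈ dezaB G b y ↔ y ∈ dezaB G b x := by
  simp only [dezaB, mem_filter, mem_univ, true_and, ne_comm (a := x), commonNbrs_comm x y]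

theorem card_dezaBc (x : V) : #(dezaBc G b x) = #(dezaB G b x) + 1 :=
  card_insert_of_notMem fun h => (mem_filter.1 h).2.1 rfl

theorem IsDezaGraph.commonNbrs_eq_of_notMem_dezaBc (h : IsDezaGraph G n k b a)
    {x y : V}
    (hy : y ∉ dezaBc G b x) : commonNbrs G x y = a := by
  rw [dezaBc, mem_insert, not_or] at hy
  refine (h.2.2.2.2 x y (Ne.symm hy.1)).resolve_left fun hb => hy.2 ?_
  exact mem_filter.2 ⟨mem_univ y, hy.1, by rw [commonNbrs_comm, hb]⟩

theorem IsDezaGraph.isSRGWith (h : IsDezaGraph G n k b b) : G.IsSRGWith n k b b where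
  card := h.2.1
  regular := h.2.2.1
  of_adj x y hxy := by
    rw [← commonNbrs_eq_card_commonNeighbors, or_self_iff.1 (h.2.2.2.2 x y hxy.ne)]
  of_not_adj x y hxy _ := by
    rw [← commonNbrs_eq_card_commonNeighbors, or_self_iff.1 (h.2.2.2.2 x y hxy)]

theorem IsStrictlyDezaGraph.lt (h : IsStrictlyDezaGraph G n k b a) : a < b := by
  refine h.1.2.2.2.1.lt_of_ne fun hab => h.2.2.2.2 ⟨b, b, ?_⟩
  exact IsDezaGraph.isSRGWith (hab ▸ h.1)

theorem sum_commonNbrs_erase (hreg : G.IsRegularOfDegree k) (v : V) :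
    ∑ u ∈ univ.erase v, commonNbrs G v u = k * (k - 1) := by
  have hleft : ∀ u, commonNbrs G v u = #((G.neighborFinset v).bipartiteAbove G.Adj u) :=
    fun u => by
      rw [commonNbrs, bipartiteAbove, ← filter_mem_eq_inter]
      simp only [mem_neighborFinset]
  have hright : ∀ w ∈ G.neighborFinset v, #((univ.erase v).bipartiteBelow G.Adj w) = k - 1 :=
    fun w hw => by
      have hbelow : (univ.erase v).bipartiteBelow G.Adj w = (G.neighborFinset w).erase v := by
        ext u
        simp [bipartiteBelow, adj_comm, and_comm]
      rw [hbelow, card_erase_of_mem (by simpa [adj_comm] using hw), card_neighborFinset_eq_degree,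
        hreg w]
  rw [sum_congr rfl fun u _ => hleft u, sum_card_bipartiteAbove_eq_sum_card_bipartiteBelow,
    sum_congr rfl hright, sum_const, card_neighborFinset_eq_degree, hreg v, smul_eq_mul]

theorem IsDezaGraph.card_dezaB_mul_add (h : IsDezaGraph G n k b a) (v : V) :
    #(dezaB G b v) * b + (n - 1 - #(dezaB G b v)) * a = k * (k - 1) := by
  have hsub : dezaB G b v ⊆ univ.erase v := fun u hu => by
    simp only [dezaB, mem_filter] at hu
    exact mem_erase.2 ⟨hu.2.1, mem_univ u⟩
  have hB : ∀ u ∈ dezaB G b v, commonNbrs G v u = b := fun u hu => by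
    simp only [dezaB, mem_filter] at hu
    rw [commonNbrs_comm, hu.2.2]
  have hA : ∀ u ∈ univ.erase v \ dezaB G b v, commonNbrs G v u = a := fun u hu => by
    simp only [dezaB, mem_sdiff, mem_erase, mem_filter, mem_univ, true_and, not_and] at hu
    refine (h.2.2.2.2 v u (Ne.symm hu.1.1)).resolve_left fun hvu => ?_
    exact hu.2 hu.1.1 (by rw [commonNbrs_comm, hvu])
  rw [← sum_commonNbrs_erase h.2.2.1 v, ← sum_sdiff hsub, sum_congr rfl hA, sum_congr rfl hB,
    sum_const, sum_const, card_sdiff_of_subset hsub, card_erase_of_mem (mem_univ v), card_univ,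
    h.2.1, smul_eq_mul, smul_eq_mul, add_comm]

theorem IsDezaGraph.card_dezaB_eq (h : IsDezaGraph G n k b a) (hab : a < b) (v w : V) :
    #(dezaB G b v) = #(dezaB G b w) := by
  have hle : ∀ x, #(dezaB G b x) ≤ n - 1 := fun x => by
    rw [← h.2.1, ← card_univ, ← card_erase_of_mem (mem_univ x)]
    exact card_le_card fun u hu => mem_erase.2 ⟨(mem_filter.1 hu).2.1, mem_univ u⟩
  have hv := h.card_dezaB_mul_add v
  have hw := h.card_dezaB_mul_add w
  zify [hle v, hle w] at hv hw
  have hprod : ((#(dezaB G b v) : ℤ) - #(dezaB G b w)) * ((b : ℤ) - a) = 0 := by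
    linear_combination hv - hw
  have hba : (b : ℤ) - a ≠ 0 := by omega
  exact_mod_cast sub_eq_zero.1 ((mul_eq_zero.1 hprod).resolve_right hba)

end DezaGraph

section TypeC

variable {V : Type u} [Fintype V] [DecidableEq V] {G : SimpleGraph V} [DecidableRel G.Adj]
  {n b a s : ℕ} {σ : V → V} {u v w x y z : V}

def IsTwinMap (G : SimpleGraph V) [DecidableRel G.Adj] (b : ℕ) (σ : V → V) : Prop :=
  ∀ v, dezaB G b v ∩ G.neighborFinset v = {σ v}

theorem twin_mem_dezaB (hσ : IsTwinMap G b σ) (v : V) :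
    σ v ∈ dezaB G b v :=
  (mem_inter.1 ((hσ v).symm ▸ mem_singleton_self (σ v))).1

theorem adj_twin (hσ : IsTwinMap G b σ) (v : V) :
    G.Adj v (σ v) :=
  (mem_neighborFinset _ _ _).1 (mem_inter.1 ((hσ v).symm ▸ mem_singleton_self (σ v))).2

theorem eq_twin_of_adj (hσ : IsTwinMap G b σ)
    (hadj : G.Adj v u) (hu : u ∈ dezaB G b v) : u = σ v :=
  mem_singleton.1 (hσ v ▸ mem_inter.2 ⟨hu, (mem_neighborFinset _ _ _).2 hadj⟩)

theorem twin_involutive (hσ : IsTwinMap G b σ) :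
    Function.Involutive σ := fun v =>
  (eq_twin_of_adj hσ (adj_twin hσ v).symm (mem_dezaB_comm.1 (twin_mem_dezaB hσ v))).symm

theorem mem_dezaB_iff (hreg : G.IsRegularOfDegree (b + 1)) :
    u ∈ dezaB G b v ↔ commonNbrs G u v = b := by
  simp only [dezaB, mem_filter, mem_univ, true_and, and_iff_right_iff_imp]
  rintro huv rfl
  rw [commonNbrs_self, hreg u] at huv
  omega

theorem neighborFinset_eq_insert_erase (hreg : G.IsRegularOfDegree (b + 1))
    (hu : u ∈ dezaB G b v) (hw : w ∈ G.neighborFinset v) (hwu : w ∉ G.neighborFinset u)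
    (hz : z ∈ G.neighborFinset u) (hzv : z ∉ G.neighborFinset v) :
    G.neighborFinset u = insert z ((G.neighborFinset v).erase w) := by
  refine eq_insert_erase_of_card_inter ?_ ?_ hw hwu hz hzv
  · simp only [card_neighborFinset_eq_degree, hreg u, hreg v]
  · rw [← commonNbrs, (mem_dezaB_iff hreg).1 hu, card_neighborFinset_eq_degree, hreg v]

theorem neighborFinset_twin (hreg : G.IsRegularOfDegree (b + 1))
    (hσ : IsTwinMap G b σ) (v : V) :
    G.neighborFinset (σ v) = insert v ((G.neighborFinset v).erase (σ v)) :=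
  neighborFinset_eq_insert_erase hreg (twin_mem_dezaB hσ v)
    ((mem_neighborFinset _ _ _).2 (adj_twin hσ v)) (notMem_neighborFinset_self _ _)
    ((mem_neighborFinset _ _ _).2 (adj_twin hσ v).symm) (notMem_neighborFinset_self _ _)

theorem twin_notMem_neighborFinset (hreg : G.IsRegularOfDegree (b + 1))
    (hσ : IsTwinMap G b σ) (hu : u ∈ dezaB G b v) :
    σ u ∉ G.neighborFinset v := by
  intro h
  have hv : v ∈ G.neighborFinset (σ u) := by
    simpa only [mem_neighborFinset, adj_comm] using h
  rw [neighborFinset_twin hreg hσ, mem_insert, mem_erase, mem_neighborFinset] at hv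
  rcases hv with rfl | ⟨-, hvu⟩
  · exact (mem_filter.1 hu).2.1 rfl
  · rw [eq_twin_of_adj hσ hvu.symm hu, twin_involutive hσ v] at h
    exact notMem_neighborFinset_self _ _ h

theorem neighborFinset_eq_of_mem_dezaB (hreg : G.IsRegularOfDegree (b + 1))
    (hσ : IsTwinMap G b σ) (hu : u ∈ dezaB G b v) :
    G.neighborFinset u = insert (σ u) ((G.neighborFinset v).erase (σ v)) :=
  neighborFinset_eq_insert_erase hreg hu ((mem_neighborFinset _ _ _).2 (adj_twin hσ v))
    (twin_notMem_neighborFinset hreg hσ (mem_dezaB_comm.1 hu))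
    ((mem_neighborFinset _ _ _).2 (adj_twin hσ u)) (twin_notMem_neighborFinset hreg hσ hu)

theorem mem_dezaB_of_mem_dezaB (hreg : G.IsRegularOfDegree (b + 1))
    (hσ : IsTwinMap G b σ) (hx : x ∈ dezaB G b y)
    (hz : z ∈ dezaB G b y) (hxz : x ≠ z) : x ∈ dezaB G b z := by
  have hσxz : σ x ≠ σ z := (twin_involutive hσ).injective.ne hxz
  have hσx := twin_notMem_neighborFinset hreg hσ hx
  have hσz := twin_notMem_neighborFinset hreg hσ hz
  rw [mem_dezaB_iff hreg, commonNbrs, neighborFinset_eq_of_mem_dezaB hreg hσ hx,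
    neighborFinset_eq_of_mem_dezaB hreg hσ hz,
    insert_inter_of_notMem fun h => (mem_insert.1 h).elim hσxz (hσx ∘ mem_of_mem_erase),
    inter_insert_of_notMem (hσz ∘ mem_of_mem_erase), inter_self,
    card_erase_of_mem ((mem_neighborFinset _ _ _).2 (adj_twin hσ y)),
    card_neighborFinset_eq_degree, hreg y, Nat.add_sub_cancel]

theorem mem_dezaBc_comm : x ∈ dezaBc G b y ↔ y ∈ dezaBc G b x := by
  rw [dezaBc, dezaBc, mem_insert, mem_insert, mem_dezaB_comm, eq_comm]

theorem mem_dezaBc_trans (hreg : G.IsRegularOfDegree (b + 1))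
    (hσ : IsTwinMap G b σ) (hxy : x ∈ dezaBc G b y)
    (hyz : y ∈ dezaBc G b z) : x ∈ dezaBc G b z := by
  rcases mem_insert.1 hxy with rfl | hxy
  · exact hyz
  rcases mem_insert.1 hyz with rfl | hyz
  · exact mem_insert_of_mem hxy
  by_cases hxz : x = z
  · exact hxz ▸ mem_insert_self x _
  · exact mem_insert_of_mem (mem_dezaB_of_mem_dezaB hreg hσ hxy (mem_dezaB_comm.1 hyz) hxz)

theorem dezaBc_eq_dezaBc_iff (hreg : G.IsRegularOfDegree (b + 1))
    (hσ : IsTwinMap G b σ) :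
    dezaBc G b x = dezaBc G b y ↔ y ∈ dezaBc G b x := by
  refine ⟨fun h => h ▸ mem_insert_self y _, fun h => ext fun z => ?_⟩
  exact ⟨fun hz => mem_dezaBc_trans hreg hσ hz (mem_dezaBc_comm.1 h),
    fun hz => mem_dezaBc_trans hreg hσ hz h⟩

theorem twin_mem_dezaBc (hσ : IsTwinMap G b σ) (x : V) :
    σ x ∈ dezaBc G b x :=
  mem_insert_of_mem (twin_mem_dezaB hσ x)

theorem dezaBc_twin (hreg : G.IsRegularOfDegree (b + 1))
    (hσ : IsTwinMap G b σ) (x : V) :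
    dezaBc G b (σ x) = dezaBc G b x :=
  (dezaBc_eq_dezaBc_iff hreg hσ).2 (mem_dezaBc_comm.1 (twin_mem_dezaBc hσ x))

theorem notMem_dezaBc_of_adj (hσ : IsTwinMap G b σ)
    (hadj : G.Adj x y) (hy : y ≠ σ x) : y ∉ dezaBc G b x := by
  rw [dezaBc, mem_insert, not_or]
  exact ⟨hadj.ne.symm, fun hyx => hy (eq_twin_of_adj hσ hadj hyx)⟩

theorem adj_iff_adj_of_mem_dezaBc (hreg : G.IsRegularOfDegree (b + 1))
    (hσ : IsTwinMap G b σ) (hx : x ∈ dezaBc G b v)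
    (hy : y ∉ dezaBc G b v) : G.Adj x y ↔ G.Adj v y := by
  rcases mem_insert.1 hx with rfl | hxv
  · rfl
  have hyσx : y ≠ σ x := fun h =>
    hy (h ▸ mem_dezaBc_trans hreg hσ (twin_mem_dezaBc hσ x) hx)
  have hyσv : y ≠ σ v := fun h => hy (h ▸ twin_mem_dezaBc hσ v)
  rw [← mem_neighborFinset, neighborFinset_eq_of_mem_dezaB hreg hσ hxv, mem_insert, mem_erase,
    mem_neighborFinset]
  simp only [hyσx, hyσv, false_or, ne_eq, not_false_eq_true, true_and]

theorem mem_sdiff_twins_of_mem_dezaBc (hreg : G.IsRegularOfDegree (b + 1))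
    (hσ : IsTwinMap G b σ)
    (hz : z ∈ (G.neighborFinset x ∩ G.neighborFinset y) \ {σ x, σ y})
    (hw : w ∈ dezaBc G b z) :
    w ∈ (G.neighborFinset x ∩ G.neighborFinset y) \ {σ x, σ y} := by
  simp only [mem_sdiff, mem_inter, mem_insert, mem_singleton, not_or, mem_neighborFinset] at hz ⊢
  obtain ⟨⟨hxz, hyz⟩, hzx, hzy⟩ := hz
  have hzx' : z ∉ dezaBc G b x := notMem_dezaBc_of_adj hσ hxz hzx
  have hzy' : z ∉ dezaBc G b y := notMem_dezaBc_of_adj hσ hyz hzy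
  have hw_not : ∀ v, z ∉ dezaBc G b v → w ≠ σ v := fun v hzv hwv =>
    hzv (mem_dezaBc_trans hreg hσ (mem_dezaBc_comm.1 hw) (hwv ▸ twin_mem_dezaBc hσ v))
  have hadj : ∀ v, z ∉ dezaBc G b v → (G.Adj v w ↔ G.Adj v z) := fun v hzv => by
    rw [adj_comm, adj_comm G v z]
    exact adj_iff_adj_of_mem_dezaBc hreg hσ hw (fun h => hzv (mem_dezaBc_comm.1 h))
  exact ⟨⟨(hadj x hzx').2 hxz, (hadj y hzy').2 hyz⟩, hw_not x hzx', hw_not y hzy'⟩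

theorem card_sdiff_twins_add (hreg : G.IsRegularOfDegree (b + 1))
    (hσ : IsTwinMap G b σ) (hy : y ∉ dezaBc G b x) :
    #((G.neighborFinset x ∩ G.neighborFinset y) \ {σ x, σ y}) + (if G.Adj x y then 2 else 0) =
      commonNbrs G x y := by
  have hx : x ∉ dezaBc G b y := fun h => hy (mem_dezaBc_comm.1 h)
  have hσxy : G.Adj (σ x) y ↔ G.Adj x y :=
    adj_iff_adj_of_mem_dezaBc hreg hσ (twin_mem_dezaBc hσ x) hy
  have hσyx : G.Adj (σ y) x ↔ G.Adj y x :=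
    adj_iff_adj_of_mem_dezaBc hreg hσ (twin_mem_dezaBc hσ y) hx
  split_ifs with hxy
  · have hsub : {σ x, σ y} ⊆ G.neighborFinset x ∩ G.neighborFinset y := by
      simp only [insert_subset_iff, singleton_subset_iff, mem_inter, mem_neighborFinset]
      exact ⟨⟨adj_twin hσ x, (hσxy.2 hxy).symm⟩, (hσyx.2 hxy.symm).symm, adj_twin hσ y⟩
    have hne : σ x ≠ σ y :=
      (twin_involutive hσ).injective.ne fun h => hy (h ▸ mem_insert_self x _)
    have := card_le_card hsub
    rw [card_sdiff_of_subset hsub, card_pair hne, commonNbrs]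
    rw [card_pair hne] at this
    omega
  · rw [add_zero, sdiff_eq_self_of_disjoint, commonNbrs]
    simp only [disjoint_insert_right, disjoint_singleton_right, mem_inter, mem_neighborFinset,
      not_and]
    exact ⟨fun _ h => hxy (hσxy.1 h.symm), fun h _ => hxy (hσyx.1 h.symm).symm⟩

theorem filter_dezaBc_eq (hreg : G.IsRegularOfDegree (b + 1))
    (hσ : IsTwinMap G b σ) (x : V) :
    ({y | dezaBc G b y = dezaBc G b x} : Finset V) = dezaBc G b x := by
  ext y
  rw [mem_filter, dezaBc_eq_dezaBc_iff hreg hσ, mem_dezaBc_comm]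
  exact and_iff_right (mem_univ y)

theorem dvd_card_sdiff_twins (hreg : G.IsRegularOfDegree (b + 1))
    (hσ : IsTwinMap G b σ) (hs : ∀ z, #(dezaBc G b z) = s)
    (x y : V) : s ∣ #((G.neighborFinset x ∩ G.neighborFinset y) \ {σ x, σ y}) :=
  dvd_card_of_card_fiber (dezaBc G b) (fun z => (filter_dezaBc_eq hreg hσ z).symm ▸ hs z)
    fun _ hz _ hw =>
      mem_sdiff_twins_of_mem_dezaBc hreg hσ hz ((dezaBc_eq_dezaBc_iff hreg hσ).1 hw.symm)

theorem IsDezaGraph.adj_of_notMem_dezaBc (h : IsDezaGraph G n (b + 1) b a) (hab : a < b)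
    (hσ : IsTwinMap G b σ) (hs : ∀ z, #(dezaBc G b z) = s)
    (hs3 : 3 ≤ s) (hy : y ∉ dezaBc G b x) : G.Adj x y := by
  have hreg := h.2.2.1
  by_contra hxy
  obtain ⟨z, hz⟩ : ((G.neighborFinset x).erase (σ x)).Nonempty := by
    rw [← card_pos, card_erase_of_mem ((mem_neighborFinset _ _ _).2 (adj_twin hσ x)),
      card_neighborFinset_eq_degree, hreg x]
    omega
  obtain ⟨hzσ, hxz⟩ := mem_erase.1 hz
  rw [mem_neighborFinset] at hxz
  have hz' : z ∉ dezaBc G b x := notMem_dezaBc_of_adj hσ hxz hzσ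
  have hxy_card := card_sdiff_twins_add hreg hσ hy
  have hxz_card := card_sdiff_twins_add hreg hσ hz'
  rw [if_neg hxy, h.commonNbrs_eq_of_notMem_dezaBc hy] at hxy_card
  rw [if_pos hxz, h.commonNbrs_eq_of_notMem_dezaBc hz'] at hxz_card
  have h2 : s ∣ 2 := by
    refine (Nat.dvd_add_right (dvd_card_sdiff_twins hreg hσ hs x z)).1 ?_
    rw [hxz_card, ← hxy_card, add_zero]
    exact dvd_card_sdiff_twins hreg hσ hs x y
  have := Nat.le_of_dvd two_pos h2
  omega

theorem card_dezaBc_add (hreg : G.IsRegularOfDegree (b + 1))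
    (hσ : IsTwinMap G b σ)
    (hcross : ∀ y, y ∉ dezaBc G b x → G.Adj x y) : #(dezaBc G b x) + b = Fintype.card V := by
  have hunion : dezaBc G b x ∪ G.neighborFinset x = univ := eq_univ_of_forall fun y => by
    by_cases hy : y ∈ dezaBc G b x
    · exact mem_union_left _ hy
    · exact mem_union_right _ ((mem_neighborFinset _ _ _).2 (hcross y hy))
  have hinter : dezaBc G b x ∩ G.neighborFinset x = {σ x} := by
    rw [dezaBc, insert_inter_of_notMem (notMem_neighborFinset_self _ _), hσ x]
  have := card_union_add_card_inter (dezaBc G b x) (G.neighborFinset x)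
  rw [hunion, hinter, card_univ, card_singleton, card_neighborFinset_eq_degree, hreg x] at this
  omega

theorem adj_iff_dezaBc_ne_or_eq_twin (hreg : G.IsRegularOfDegree (b + 1))
    (hσ : IsTwinMap G b σ)
    (hcross : ∀ x y, y ∉ dezaBc G b x → G.Adj x y) (x y : V) :
    G.Adj x y ↔ dezaBc G b x ≠ dezaBc G b y ∨ y = σ x := by
  rw [Ne, dezaBc_eq_dezaBc_iff hreg hσ]
  refine ⟨fun hxy => ?_, ?_⟩
  · by_cases hy : y ∈ dezaBc G b x
    · exact Or.inr (by_contra fun hyσ => notMem_dezaBc_of_adj hσ hxy hyσ hy)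
    · exact Or.inl hy
  · rintro (hy | rfl)
    exacts [hcross x y hy, adj_twin hσ x]

end TypeC

theorem stmt19 {V : Type u} [Fintype V] [DecidableEq V] (G : SimpleGraph V)
    [DecidableRel G.Adj] (n k b a : ℕ)
    (hG : IsStrictlyDezaGraph G n k b a) (hk : k = b + 1)
    (hβ : ∀ v : V, 1 < (dezaB G b v).card)
    (hC : ∀ x : V, IsTypeC G b x) :
    Nonempty (G ≃g cliqueExt2
      (completeMultipartiteGr (n / (n - k + 1)) ((n - k + 1) / 2))) := by
  have hab := hG.lt
  obtain ⟨hdeza, -⟩ := hG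
  subst hk
  obtain rfl := hdeza.2.1
  have hreg := hdeza.2.2.1
  choose σ hσ using fun v => card_eq_one.1 (hC v)
  have hsize : ∀ z x, #(dezaBc G b z) = #(dezaBc G b x) := fun z x => by
    rw [card_dezaBc, card_dezaBc, hdeza.card_dezaB_eq hab z x]
  have hcross : ∀ x y, y ∉ dezaBc G b x → G.Adj x y := fun x _ =>
    hdeza.adj_of_notMem_dezaBc hab hσ (fun z => hsize z x)
      (by rw [card_dezaBc]; exact Nat.succ_le_succ (hβ x))
  have hs : ∀ x, #(dezaBc G b x) = Fintype.card V - (b + 1) + 1 := fun x => by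
    have := card_dezaBc_add hreg hσ (hcross x)
    have := card_dezaBc (G := G) (b := b) x
    omega
  exact nonempty_iso_cliqueExt2_completeMultipartiteGr G (dezaBc G b) (twin_involutive hσ)
    (fun x => (adj_twin hσ x).ne.symm) (dezaBc_twin hreg hσ)
    (fun x => (filter_dezaBc_eq hreg hσ x).symm ▸ hs x)
    (adj_iff_dezaBc_ne_or_eq_twin hreg hσ hcross)
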